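/- Let n ≥ 2 and define r*_n(x) := −1/(2(n−1)) + √((n/(n−1))·x² + 1/(4(n−1)²)) for x ∈ [0,1], which satisfies 0 ≤ r*_n(x) ≤ 1. Let V*_n be the King operator V*_n f(x) := ∑_{k=0}^n C(n,k)·(r*_n(x))^k·(1 − r*_n(x))^{n−k}·f(k/n). Then for all f, g : [0,1] → ℝ and all x ∈ [0,1], |V*_n(f·g)(x) − V*_n f(x)·V*_n g(x)| ≤ (n/(2(n+1)))·osc_{V*_n}(f)·osc_{V*_n}(g), where osc_{V*_n}(f) := max{|f(k/n) − f(l/n)| : 0 ≤ k < l ≤ n} and similarly for g. -/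

import Mathlib

/-- The King function `r*_n(x) = -1/(2(n-1)) + √((n/(n-1)) x² + 1/(4(n-1)²))` for `n ≥ 2`. -/
noncomputable def kingR (n : ℕ) (x : ℝ) : ℝ :=
  -1 / (2 * ((n : ℝ) - 1)) +
    Real.sqrt (((n : ℝ) / ((n : ℝ) - 1)) * x ^ 2 + 1 / (4 * ((n : ℝ) - 1) ^ 2))

/-- The King-type operator `V*_n f(x) = ∑_{k=0}^n C(n,k) r*_n(x)^k (1-r*_n(x))^(n-k) f(k/n)`. -/
noncomputable def kingOp (n : ℕ) (f : ℝ → ℝ) (x : ℝ) : ℝ :=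
  ∑ k ∈ Finset.range (n + 1),
    (n.choose k : ℝ) * (kingR n x) ^ k * (1 - kingR n x) ^ (n - k) * f (k / n)
open Finset

section WeightedCovariance

variable {ι : Type*} (s : Finset ι) (p F G : ι → ℝ)

noncomputable def weightedCov : ℝ :=
  ∑ k ∈ s, p k * (F k * G k) - (∑ k ∈ s, p k * F k) * ∑ k ∈ s, p k * G k

variable {s p F G}

theorem weightedCov_eq_half_sum_sum (hps : ∑ k ∈ s, p k = 1) :
    weightedCov s p F G =
      (1 / 2) * ∑ k ∈ s, ∑ l ∈ s, p k * p l * ((F k - F l) * (G k - G l)) := by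
  have expand : ∀ k l, p k * p l * ((F k - F l) * (G k - G l)) =
      p l * (p k * (F k * G k)) + p k * (p l * (F l * G l))
        - p k * F k * (p l * G l) - p l * F l * (p k * G k) := fun _ _ => by ring
  simp only [expand, sum_add_distrib, sum_sub_distrib, ← mul_sum, ← sum_mul, hps, weightedCov]
  ring

theorem abs_weightedCov_le [DecidableEq ι] (hp : ∀ k ∈ s, 0 ≤ p k) (hps : ∑ k ∈ s, p k = 1)
    {Mf Mg : ℝ} (hF : ∀ k ∈ s, ∀ l ∈ s, k ≠ l → |F k - F l| ≤ Mf)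
    (hG : ∀ k ∈ s, ∀ l ∈ s, k ≠ l → |G k - G l| ≤ Mg) :
    |weightedCov s p F G| ≤ 1 / 2 * (1 - ∑ k ∈ s, p k ^ 2) * (Mf * Mg) := by
  set C := Mf * Mg
  have hterm : ∀ k ∈ s, ∀ l ∈ s, |p k * p l * ((F k - F l) * (G k - G l))| ≤
      p k * p l * C - if k = l then p k * p l * C else 0 := by
    intro k hk l hl
    split_ifs with hkl
    · simp [hkl]
    · have hpkl := mul_nonneg (hp k hk) (hp l hl)
      have hMf_nonneg := (abs_nonneg _).trans (hF k hk l hl hkl)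
      rw [sub_zero, abs_mul, abs_mul _ (G k - G l), abs_of_nonneg hpkl]
      exact mul_le_mul_of_nonneg_left
        (mul_le_mul (hF k hk l hl hkl) (hG k hk l hl hkl) (abs_nonneg _) hMf_nonneg) hpkl
  have hdiag : ∑ k ∈ s, ∑ l ∈ s, (if k = l then p k * p l * C else 0) =
      (∑ k ∈ s, p k ^ 2) * C := by
    simp only [sum_ite_eq, sq, sum_mul]
    exact sum_congr rfl fun k hk => by simp [hk]
  calc |weightedCov s p F G|
      = 1 / 2 * |∑ k ∈ s, ∑ l ∈ s, p k * p l * ((F k - F l) * (G k - G l))| := by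
        rw [weightedCov_eq_half_sum_sum hps, abs_mul, abs_of_pos one_half_pos]
    _ ≤ 1 / 2 * ∑ k ∈ s, ∑ l ∈ s, (p k * p l * C - if k = l then p k * p l * C else 0) := by
        gcongr
        refine (abs_sum_le_sum_abs _ _).trans (sum_le_sum fun k hk => ?_)
        exact (abs_sum_le_sum_abs _ _).trans (sum_le_sum (hterm k hk))
    _ = 1 / 2 * (1 - ∑ k ∈ s, p k ^ 2) * C := by
        simp only [sum_sub_distrib, hdiag, ← sum_mul, ← mul_sum, hps]
        ring

theorem inv_card_le_sum_sq (hps : ∑ k ∈ s, p k = 1) : 1 / (#s : ℝ) ≤ ∑ k ∈ s, p k ^ 2 := by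
  have hs : (0 : ℝ) < #s := by
    rw [Nat.cast_pos, card_pos]
    exact nonempty_of_sum_ne_zero (hps.trans_ne one_ne_zero)
  rw [div_le_iff₀' hs]
  simpa [hps] using sq_sum_le_card_mul_sum_sq (s := s) (f := p)

end WeightedCovariance

theorem kingR_nonneg {n : ℕ} (hn : 1 < n) (x : ℝ) : 0 ≤ kingR n x := by
  have ha : (0 : ℝ) < n - 1 := by
    rw [sub_pos]
    exact_mod_cast hn
  have hroot : 1 / (2 * ((n : ℝ) - 1)) ≤
      Real.sqrt ((n : ℝ) / (n - 1) * x ^ 2 + 1 / (4 * ((n : ℝ) - 1) ^ 2)) := by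
    rw [Real.le_sqrt (by positivity) (by positivity)]
    calc (1 / (2 * ((n : ℝ) - 1))) ^ 2 = 1 / (4 * ((n : ℝ) - 1) ^ 2) := by
          rw [div_pow, mul_pow]; norm_num
      _ ≤ _ := le_add_of_nonneg_left (by positivity)
  rw [kingR, neg_div]
  linarith

theorem kingR_le_one {n : ℕ} (hn : 1 < n) {x : ℝ} (hx : x ^ 2 ≤ 1) : kingR n x ≤ 1 := by
  have ha : (0 : ℝ) < n - 1 := by
    rw [sub_pos]
    exact_mod_cast hn
  -- `n / (n - 1) + 1 / (4 (n - 1)²) = (1 + 1 / (2 (n - 1)))²`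
  have hroot : Real.sqrt ((n : ℝ) / (n - 1) * x ^ 2 + 1 / (4 * ((n : ℝ) - 1) ^ 2)) ≤
      1 + 1 / (2 * ((n : ℝ) - 1)) := by
    rw [Real.sqrt_le_left (by positivity)]
    have : (n : ℝ) / (n - 1) * x ^ 2 ≤ n / (n - 1) := by
      have : 0 ≤ (n : ℝ) / (n - 1) := by positivity
      nlinarith
    calc _ ≤ (n : ℝ) / (n - 1) + 1 / (4 * ((n : ℝ) - 1) ^ 2) := by linarith
      _ = _ := by field_simp; ring
  rw [kingR, neg_div]
  linarith

theorem abs_sub_le_sSup_abs_sub (u : ℕ → ℝ) {n k l : ℕ} (hk : k ≤ n) (hl : l ≤ n) :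
    |u k - u l| ≤ sSup {d : ℝ | ∃ k l : ℕ, k < l ∧ l ≤ n ∧ d = |u k - u l|} := by
  have hbdd : BddAbove {d : ℝ | ∃ k l : ℕ, k < l ∧ l ≤ n ∧ d = |u k - u l|} := by
    refine (((Set.finite_Iic n).image2 (fun k l => |u k - u l|) (Set.finite_Iic n)).subset
      ?_).bddAbove
    rintro d ⟨k, l, hkl, hln, rfl⟩
    exact ⟨k, hkl.le.trans hln, l, hln, rfl⟩
  rcases lt_trichotomy k l with hkl | rfl | hlk
  · exact le_csSup hbdd ⟨k, l, hkl, hl, rfl⟩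
  · rw [sub_self, abs_zero]
    exact Real.sSup_nonneg (by rintro _ ⟨k, l, -, -, rfl⟩; exact abs_nonneg _)
  · rw [abs_sub_comm]
    exact le_csSup hbdd ⟨l, k, hlk, hk, rfl⟩

theorem sum_choose_mul_pow_mul_one_sub_pow (n : ℕ) (r : ℝ) :
    ∑ k ∈ range (n + 1), (n.choose k : ℝ) * r ^ k * (1 - r) ^ (n - k) = 1 := by
  have h := add_pow r (1 - r) n
  rw [add_sub_cancel, one_pow] at h
  exact (sum_congr rfl fun k _ => by ring).trans h.symm

/-- For `n ≥ 2`, `0 ≤ r*_n ≤ 1` on `[0,1]` and the new Chebyshev-Grüss-type inequality for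
the King-type operator holds. -/
theorem king_chebyshev_gruss (n : ℕ) (hn : 2 ≤ n)
    (f g : ℝ → ℝ) (x : ℝ) (hx : x ∈ Set.Icc (0:ℝ) 1) :
    (0 ≤ kingR n x ∧ kingR n x ≤ 1) ∧
    |kingOp n (fun t => f t * g t) x - kingOp n f x * kingOp n g x| ≤
      ((n : ℝ) / (2 * ((n : ℝ) + 1))) *
        sSup {d : ℝ | ∃ k l : ℕ, k < l ∧ l ≤ n ∧ d = |f (k / n) - f (l / n)|} *
        sSup {d : ℝ | ∃ k l : ℕ, k < l ∧ l ≤ n ∧ d = |g (k / n) - g (l / n)|} := by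
  have hx2 : x ^ 2 ≤ 1 := by nlinarith [hx.1, hx.2]
  have hr0 := kingR_nonneg hn x
  have hr1 := kingR_le_one hn hx2
  refine ⟨⟨hr0, hr1⟩, ?_⟩
  set p : ℕ → ℝ := fun k => n.choose k * kingR n x ^ k * (1 - kingR n x) ^ (n - k)
  have hp : ∀ k ∈ range (n + 1), 0 ≤ p k := fun k _ => by
    have := sub_nonneg.mpr hr1
    positivity
  have hps : ∑ k ∈ range (n + 1), p k = 1 := sum_choose_mul_pow_mul_one_sub_pow n _
  have hosc (u : ℕ → ℝ) : ∀ k ∈ range (n + 1), ∀ l ∈ range (n + 1), k ≠ l →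
      |u k - u l| ≤ sSup {d : ℝ | ∃ k l : ℕ, k < l ∧ l ≤ n ∧ d = |u k - u l|} :=
    fun _ hk _ hl _ =>
      abs_sub_le_sSup_abs_sub u (mem_range_succ_iff.mp hk) (mem_range_succ_iff.mp hl)
  have hosc_nonneg (u : ℕ → ℝ) :=
    (abs_nonneg _).trans (abs_sub_le_sSup_abs_sub u (Nat.zero_le n) (Nat.zero_le n))
  have hcoef : 1 / 2 * (1 - ∑ k ∈ range (n + 1), p k ^ 2) ≤ n / (2 * (n + 1)) := by
    have hsq := inv_card_le_sum_sq hps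
    rw [card_range, Nat.cast_succ] at hsq
    calc _ ≤ 1 / 2 * (1 - 1 / ((n : ℝ) + 1)) := by gcongr
      _ = _ := by field_simp; ring
  calc _ = |weightedCov (range (n + 1)) p (fun k => f (k / n)) (fun k => g (k / n))| := rfl
    _ ≤ _ := abs_weightedCov_le hp hps (hosc _) (hosc _)
    _ ≤ _ := (mul_le_mul_of_nonneg_right hcoef
        (mul_nonneg (hosc_nonneg _) (hosc_nonneg _))).trans_eq (mul_assoc _ _ _).symm
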